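/- The two-player game on outcomes {x,y,z} where player 1 chooses between x and moving to player 2, who chooses between y and z, with preferences y ≺₁ x ≺₁ z and x ≺₂ z ≺₂ y, has no Strong Nash Equilibrium, and its {I,L}-dynamics graph on the four strategy profiles {ll, lr, rl, rr} contains the cycle ll ⇀ rr ⇀ rl ⇀ ll. -/

import Mathlib

namespace SeqGame

inductive GameTree (N O : Type) : Type where
  | leaf (o : O) : GameTree N O
  | node (i : N) (children : List (GameTree N O)) : GameTree N O

namespace GameTree

variable {N O : Type}

/-- The subtree of `T` at position `p` (a list of child indices), if it exists. -/
def subtree : GameTree N O → List ℕ → Option (GameTree N O)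
  | t, [] => some t
  | leaf _, _ :: _ => none
  | node _ c, k :: p =>
    match getElem? c k with
    | some t => subtree t p
    | none => none

/-- A strategy profile: a choice of a child index at every position. -/
abbrev Profile := List ℕ → ℕ

/-- A profile is legal if it chooses an existing child at every internal node. -/
def Legal (T : GameTree N O) (s : Profile) : Prop :=
  ∀ p i c, T.subtree p = some (node i c) → s p < c.length

/-- The profiles `s` and `s'` differ at the (valid, internal) node `p`. -/
def Differs (T : GameTree N O) (s s' : Profile) (p : List ℕ) : Prop :=
  (∃ i c, T.subtree p = some (node i c)) ∧ s p ≠ s' p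

/-- The outcome reached when playing according to the profile `s`. -/
def outcome : GameTree N O → Profile → Option O
  | leaf o, _ => some o
  | node _ c, s =>
    match h : getElem? c (s []) with
    | some t => outcome t (fun p => s (s [] :: p))
    | none => none
decreasing_by
  have hm : t ∈ c := by
    exact List.mem_of_getElem? h
  have := List.sizeOf_lt_of_mem hm
  simp only [node.sizeOf_spec]
  omega

/-- The profile `s` re-rooted at position `p`. -/
def shift (s : Profile) (p : List ℕ) : Profile := fun q => s (p ++ q)

/-- The owner of the node at position `p`, if it is internal. -/
def ownerAt (T : GameTree N O) (p : List ℕ) : Option N :=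
  match T.subtree p with
  | some (node i _) => some i
  | _ => none

/-- `p` lies along the play induced by `s`. -/
def OnPlay (s : Profile) (p : List ℕ) : Prop :=
  ∀ q k, (q ++ [k]) <+: p → s q = k

/-- Improvement property: every player who changes strictly improves the outcome. -/
def Iprop (T : GameTree N O) (pref : N → O → O → Prop) (s s' : Profile) : Prop :=
  ∀ p i c, T.subtree p = some (node i c) → s p ≠ s' p →
    ∃ x y, T.outcome s = some x ∧ T.outcome s' = some y ∧ pref i x y

/-- Subgame improvement property. -/
def SIprop (T : GameTree N O) (pref : N → O → O → Prop) (s s' : Profile) : Prop :=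
  ∀ p i c, T.subtree p = some (node i c) → s p ≠ s' p →
    ∃ x y, outcome (node i c) (shift s p) = some x ∧
      outcome (node i c) (shift s' p) = some y ∧ pref i x y

/-- Laziness property: all changed nodes lie along the play induced by `s'`. -/
def Lprop (T : GameTree N O) (s s' : Profile) : Prop :=
  ∀ p, Differs T s s' p → OnPlay s' p

/-- One player property: at most one player changes his strategy. -/
def P1prop (T : GameTree N O) (s s' : Profile) : Prop :=
  ∃ i : N, ∀ p, Differs T s s' p → T.ownerAt p = some i

/-- Atomicity property: at most one node changes. -/
def Aprop (T : GameTree N O) (s s' : Profile) : Prop :=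
  ∀ p q, Differs T s s' p → Differs T s s' q → p = q

/-- Names of the update properties. -/
inductive Upd : Type | I | SI | L | P1 | A
deriving DecidableEq

/-- Interpretation of an update property name. -/
def holds (T : GameTree N O) (pref : N → O → O → Prop) : Upd → Profile → Profile → Prop
  | .I => Iprop T pref
  | .SI => SIprop T pref
  | .L => Lprop T
  | .P1 => P1prop T
  | .A => Aprop T

/-- The X-dynamics: an actual update (between legal profiles) satisfying
all properties in `X`. -/
def XDyn (X : Set Upd) (T : GameTree N O) (pref : N → O → O → Prop)
    (s s' : Profile) : Prop :=
  Legal T s ∧ Legal T s' ∧ (∃ p, Differs T s s' p) ∧ ∀ u ∈ X, holds T pref u s s'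

/-- A dynamics terminates iff there is no infinite update sequence. -/
def Terminates (D : Profile → Profile → Prop) : Prop :=
  ¬ ∃ f : ℕ → Profile, ∀ n, D (f n) (f (n + 1))

/-- `s'` is a deviation from `s` by the coalition `I`. -/
def Deviation (T : GameTree N O) (I : Set N) (s s' : Profile) : Prop :=
  Legal T s' ∧ ∀ p i c, T.subtree p = some (node i c) → i ∉ I → s p = s' p

/-- Nash equilibrium. -/
def IsNE (T : GameTree N O) (pref : N → O → O → Prop) (s : Profile) : Prop :=
  ∀ i s', Deviation T {i} s s' →
    ∀ x y, T.outcome s = some x → T.outcome s' = some y → ¬ pref i x y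

/-- Subgame perfect equilibrium: an NE in every subgame. -/
def IsSPE (T : GameTree N O) (pref : N → O → O → Prop) (s : Profile) : Prop :=
  ∀ p t, T.subtree p = some t → IsNE t pref (shift s p)

/-- Strong Nash equilibrium (Aumann). -/
def IsSNE (T : GameTree N O) (pref : N → O → O → Prop) (s : Profile) : Prop :=
  ∀ I : Set N, I.Nonempty → ∀ s', Deviation T I s s' →
    ∃ i ∈ I, ∀ x y, T.outcome s = some x → T.outcome s' = some y → ¬ pref i x y

/-- A relation is acyclic if it has no cycle. -/
def Acyclic (r : O → O → Prop) : Prop := ∀ x, ¬ Relation.TransGen r x x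

/-- Incomparability. -/
def Incomp (r : O → O → Prop) (x y : O) : Prop := ¬ r x y ∧ ¬ r y x

/-- Strict weak order: irreflexive, transitive, with transitive incomparability. -/
def IsSWO (r : O → O → Prop) : Prop :=
  (∀ x, ¬ r x x) ∧ (∀ x y z, r x y → r y z → r x z) ∧
    (∀ x y z, Incomp r x y → Incomp r y z → Incomp r x z)

/-- Strict linear order: irreflexive, transitive and total. -/
def IsSLO (r : O → O → Prop) : Prop :=
  (∀ x, ¬ r x x) ∧ (∀ x y z, r x y → r y z → r x z) ∧
    (∀ x y, x ≠ y → r x y ∨ r y x)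

/-- Absence of the main pattern. -/
def OutOfMainPattern (pref : N → O → O → Prop) : Prop :=
  ∀ (i j : N) (x y z : O),
    ¬ (pref i x y ∧ pref i y z ∧ pref j y z ∧ pref j z x)

/-- Absence of the secondary pattern. -/
def OutOfSecondaryPattern (pref : N → O → O → Prop) : Prop :=
  ∀ (i j : N) (w x y z : O),
    ¬ (pref i w x ∧ pref i x y ∧ pref i y z ∧
       Incomp (pref j) x z ∧ pref j z w ∧ Incomp (pref j) w y)

/-- Absence of both patterns. -/
def OutOfPattern (pref : N → O → O → Prop) : Prop :=
  OutOfMainPattern pref ∧ OutOfSecondaryPattern pref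

/-- The preferences can be layered: there is an ordered partition of the
outcomes (given by a layer-index function) such that higher layers are
unanimously weakly preferred, and within a layer no two players agree on
one pair while disagreeing on another pair. -/
def CanBeLayered (pref : N → O → O → Prop) : Prop :=
  ∃ ℓ : O → ℕ,
    (∀ x y, ℓ x < ℓ y → ∀ i, ¬ pref i y x) ∧
    (∀ (i j : N) (w x y z : O), ℓ w = ℓ x → ℓ x = ℓ y → ℓ y = ℓ z →
      ¬ (pref i x y ∧ pref j x y ∧ pref i w z ∧ pref j z w))

end GameTree
end SeqGame

namespace SeqGame.GameTree

/-- Outcomes `x = 0`, `y = 1`, `z = 2`; preferences `y ≺₁ x ≺₁ z` and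
`x ≺₂ z ≺₂ y`. -/
def pref16 : Fin 2 → Fin 3 → Fin 3 → Prop := fun i a b =>
  if i = 0 then (a = 1 ∧ b = 0) ∨ (a = 1 ∧ b = 2) ∨ (a = 0 ∧ b = 2)
  else (a = 0 ∧ b = 2) ∨ (a = 0 ∧ b = 1) ∨ (a = 2 ∧ b = 1)

/-- Player 1 chooses between `x` and moving to player 2, who chooses
between `y` and `z`. -/
def T16 : GameTree (Fin 2) (Fin 3) :=
  .node 0 [.leaf 0, .node 1 [.leaf 1, .leaf 2]]

/-- The profile `ll`. -/
def sll : Profile := fun _ => 0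

/-- The profile `rr`. -/
def srr : Profile := fun _ => 1

/-- The profile `rl`. -/
def srl : Profile := fun p => if p = [] then 1 else 0

/-!
Every outcome is blocked by a coalition: from `x` both players gain by jointly moving to `z`,
from `y` player 1 gains by switching to `x`, and from `z` player 2 gains by switching to `y`.
The three steps of the cycle are improvements of exactly this kind, each changing only nodes on
the new play.
-/

section General

variable {N O : Type} {T : GameTree N O} {pref : N → O → O → Prop} {s s' : Profile}

theorem outcome_leaf (o : O) (s : Profile) : outcome (leaf o : GameTree N O) s = some o := by
  rw [outcome]

theorem outcome_node_of_getElem_eq_some {i : N} {c : List (GameTree N O)} {t : GameTree N O}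
    (h : getElem? c (s []) = some t) : outcome (node i c) s = outcome t (shift s [s []]) := by
  rw [outcome]
  split
  · rename_i t' ht'
    rw [ht', Option.some_inj] at h
    subst h
    rfl
  · rename_i ht'
    simp [ht'] at h

theorem subtree_leaf_ne_some_node (o : O) (p : List ℕ) (i : N) (c : List (GameTree N O)) :
    (leaf o : GameTree N O).subtree p ≠ some (node i c) := by
  cases p <;> simp [subtree]

theorem onPlay_nil (s : Profile) : OnPlay s [] := by
  rintro q k ⟨t, ht⟩
  simp at ht

theorem onPlay_singleton {k : ℕ} : OnPlay s [k] ↔ s [] = k := by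
  refine ⟨fun h => h [] k List.prefix_rfl, fun h q k' ⟨t, ht⟩ => ?_⟩
  rcases q with _ | ⟨a, q⟩ <;> simp_all

theorem not_isSNE_of_deviation {I : Set N} {x y : O} (hI : I.Nonempty)
    (hdev : Deviation T I s s') (hx : T.outcome s = some x) (hy : T.outcome s' = some y)
    (hxy : ∀ i ∈ I, pref i x y) : ¬ IsSNE T pref s := fun h => by
  obtain ⟨i, hi, hblock⟩ := h I hI s' hdev
  exact hblock x y hx hy (hxy i hi)

theorem deviation_univ (h : Legal T s') : Deviation T Set.univ s s' :=
  ⟨h, fun _ _ _ _ hi => absurd (Set.mem_univ _) hi⟩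

theorem deviation_update {p : List ℕ} {i : N} {c : List (GameTree N O)} {k : ℕ}
    (hp : T.subtree p = some (node i c)) (hleg : Legal T (Function.update s p k)) :
    Deviation T {i} s (Function.update s p k) := by
  refine ⟨hleg, fun q j d hq hj => ?_⟩
  have hqp : q ≠ p := by
    rintro rfl
    simp_all
  rw [Function.update_of_ne hqp]

theorem xDyn_I_L_iff :
    XDyn {Upd.I, Upd.L} T pref s s' ↔
      Legal T s ∧ Legal T s' ∧ (∃ p, Differs T s s' p) ∧ Iprop T pref s s' ∧ Lprop T s s' := by
  simp [XDyn, holds]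

end General

theorem subtree_T16_eq_node {p : List ℕ} {i : Fin 2} {c : List (GameTree (Fin 2) (Fin 3))}
    (h : T16.subtree p = some (node i c)) :
    (p = [] ∧ i = 0 ∧ c = [leaf 0, node 1 [leaf 1, leaf 2]]) ∨
      (p = [1] ∧ i = 1 ∧ c = [leaf 1, leaf 2]) := by
  rcases p with _ | ⟨_ | _ | k, _ | ⟨_ | _ | m, q⟩⟩ <;>
    simp [T16, subtree, subtree_leaf_ne_some_node] at h ⊢ <;> exact ⟨h.1.symm, h.2.symm⟩

theorem subtree_T16_nil : T16.subtree [] = some (node 0 [leaf 0, node 1 [leaf 1, leaf 2]]) := rfl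

theorem subtree_T16_one : T16.subtree [1] = some (node 1 [leaf 1, leaf 2]) := by
  simp [T16, subtree]

theorem legal_T16_iff {s : Profile} : Legal T16 s ↔ s [] < 2 ∧ s [1] < 2 := by
  refine ⟨fun h => ⟨h [] _ _ subtree_T16_nil, h [1] _ _ subtree_T16_one⟩, ?_⟩
  rintro ⟨h0, h1⟩ p i c hp
  rcases subtree_T16_eq_node hp with ⟨rfl, -, rfl⟩ | ⟨rfl, -, rfl⟩ <;> simp <;> omega

theorem outcome_T16_of_left {s : Profile} (h : s [] = 0) : T16.outcome s = some 0 := by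
  rw [T16, outcome_node_of_getElem_eq_some (t := leaf 0) (by simp [h]), outcome_leaf]

theorem outcome_T16_of_right {s : Profile} (h : s [] = 1) :
    T16.outcome s =
      outcome (node 1 [leaf 1, leaf 2] : GameTree (Fin 2) (Fin 3)) (shift s [1]) := by
  rw [T16, outcome_node_of_getElem_eq_some (t := node 1 [leaf 1, leaf 2]) (by simp [h]), h]

theorem outcome_T16_of_right_left {s : Profile} (h : s [] = 1) (h1 : s [1] = 0) :
    T16.outcome s = some 1 := by
  rw [outcome_T16_of_right h,
    outcome_node_of_getElem_eq_some (t := leaf 1) (by simp [shift, h1]), outcome_leaf]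

theorem outcome_T16_of_right_right {s : Profile} (h : s [] = 1) (h1 : s [1] = 1) :
    T16.outcome s = some 2 := by
  rw [outcome_T16_of_right h,
    outcome_node_of_getElem_eq_some (t := leaf 2) (by simp [shift, h1]), outcome_leaf]

theorem outcome_T16_sll : T16.outcome sll = some 0 := outcome_T16_of_left rfl

theorem outcome_T16_srl : T16.outcome srl = some 1 := outcome_T16_of_right_left rfl rfl

theorem outcome_T16_srr : T16.outcome srr = some 2 := outcome_T16_of_right_right rfl rfl

theorem iprop_T16_iff {pref : Fin 2 → Fin 3 → Fin 3 → Prop} {s s' : Profile} :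
    Iprop T16 pref s s' ↔
      (s [] ≠ s' [] → ∃ x y, T16.outcome s = some x ∧ T16.outcome s' = some y ∧ pref 0 x y) ∧
      (s [1] ≠ s' [1] → ∃ x y, T16.outcome s = some x ∧ T16.outcome s' = some y ∧ pref 1 x y) := by
  refine ⟨fun h => ⟨h [] _ _ subtree_T16_nil, h [1] _ _ subtree_T16_one⟩, ?_⟩
  rintro ⟨h0, h1⟩ p i c hp
  rcases subtree_T16_eq_node hp with ⟨rfl, rfl, -⟩ | ⟨rfl, rfl, -⟩
  exacts [h0, h1]

theorem lprop_T16_iff {s s' : Profile} : Lprop T16 s s' ↔ (s [1] ≠ s' [1] → s' [] = 1) := by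
  refine ⟨fun h hne => onPlay_singleton.1 (h [1] ⟨⟨_, _, subtree_T16_one⟩, hne⟩), ?_⟩
  rintro h p ⟨⟨i, c, hp⟩, hne⟩
  rcases subtree_T16_eq_node hp with ⟨rfl, -, -⟩ | ⟨rfl, -, -⟩
  · exact onPlay_nil s'
  · exact onPlay_singleton.2 (h hne)

theorem not_isSNE_T16 {s : Profile} (hs : Legal T16 s) : ¬ IsSNE T16 pref16 s := by
  obtain ⟨h0, h1⟩ := legal_T16_iff.1 hs
  interval_cases hroot : s []
  · exact not_isSNE_of_deviation Set.univ_nonempty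
      (deviation_univ (legal_T16_iff.2 (by simp [srr])))
      (outcome_T16_of_left hroot) outcome_T16_srr (by simp [pref16])
  interval_cases hsub : s [1]
  · exact not_isSNE_of_deviation (Set.singleton_nonempty 0)
      (deviation_update (k := 0) subtree_T16_nil (legal_T16_iff.2 (by simp [hsub])))
      (outcome_T16_of_right_left hroot hsub) (outcome_T16_of_left (by simp)) (by simp [pref16])
  · exact not_isSNE_of_deviation (Set.singleton_nonempty 1)
      (deviation_update (k := 0) subtree_T16_one (legal_T16_iff.2 (by simp [hroot])))
      (outcome_T16_of_right_right hroot hsub)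
      (outcome_T16_of_right_left (by simp [hroot]) (by simp))
      (by simp [pref16])

theorem xDyn_T16_ll_rr : XDyn {Upd.I, Upd.L} T16 pref16 sll srr := by
  rw [xDyn_I_L_iff, iprop_T16_iff, lprop_T16_iff, legal_T16_iff, legal_T16_iff]
  refine ⟨?_, ?_, ⟨[], ⟨_, _, subtree_T16_nil⟩, ?_⟩, ?_, ?_⟩ <;>
    simp [sll, srr, outcome_T16_sll, outcome_T16_srr, pref16]

theorem xDyn_T16_rr_rl : XDyn {Upd.I, Upd.L} T16 pref16 srr srl := by
  rw [xDyn_I_L_iff, iprop_T16_iff, lprop_T16_iff, legal_T16_iff, legal_T16_iff]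
  refine ⟨?_, ?_, ⟨[1], ⟨_, _, subtree_T16_one⟩, ?_⟩, ?_, ?_⟩ <;>
    simp [srr, srl, outcome_T16_srr, outcome_T16_srl, pref16]

theorem xDyn_T16_rl_ll : XDyn {Upd.I, Upd.L} T16 pref16 srl sll := by
  rw [xDyn_I_L_iff, iprop_T16_iff, lprop_T16_iff, legal_T16_iff, legal_T16_iff]
  refine ⟨?_, ?_, ⟨[], ⟨_, _, subtree_T16_nil⟩, ?_⟩, ?_, ?_⟩ <;>
    simp [srl, sll, outcome_T16_srl, outcome_T16_sll, pref16]

/-- The game has no strong Nash equilibrium, and its {I,L}-dynamics contains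
the cycle `ll ⇀ rr ⇀ rl ⇀ ll`. -/
theorem stmt_16 :
    (¬ ∃ s, Legal T16 s ∧ IsSNE T16 pref16 s) ∧
    XDyn {Upd.I, Upd.L} T16 pref16 sll srr ∧
    XDyn {Upd.I, Upd.L} T16 pref16 srr srl ∧
    XDyn {Upd.I, Upd.L} T16 pref16 srl sll :=
  ⟨fun ⟨_, hs, hsne⟩ => not_isSNE_T16 hs hsne, xDyn_T16_ll_rr, xDyn_T16_rr_rl, xDyn_T16_rl_ll⟩

end SeqGame.GameTree
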